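/- For a 3×3 traceless symmetric real matrix M, setting y = tr(M²) and z = tr(M³), the characteristic polynomial of M is x³ − (y/2)·x − (z/3); moreover if y > 0 then the quantity ζ = z²/y³ satisfies 0 ≤ ζ ≤ 1/6. -/

import Mathlib

/-!
Diagonalise `M` orthogonally: its characteristic polynomial is `∏ (X - λᵢ)` and
`tr Mᵏ = Σ λᵢᵏ`, so everything reduces to three real numbers with `λ₁ + λ₂ + λ₃ = 0`.
Newton's identities give the coefficients `-y/2` and `-z/3`, and the bound `z² ≤ y³/6` is
the nonnegativity of the discriminant `y³/2 - 3z² = ∏ (λᵢ - λⱼ)²` of a cubic with real roots.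
-/

open Matrix Polynomial

namespace Matrix.IsHermitian

variable {𝕜 n : Type*} [RCLike 𝕜] [Fintype n] [DecidableEq n] {A : Matrix n n 𝕜}

theorem trace_pow_eq_sum_eigenvalues_pow (hA : A.IsHermitian) (k : ℕ) :
    (A ^ k).trace = ∑ i, (hA.eigenvalues i : 𝕜) ^ k := by
  conv_lhs => rw [hA.spectral_theorem, ← map_pow, Unitary.conjStarAlgAut_apply, trace_mul_cycle,
    Unitary.coe_star_mul_self, one_mul, diagonal_pow, trace_diagonal]
  rfl

end Matrix.IsHermitian

theorem prod_X_sub_C_of_add_add_eq_zero {K : Type*} [Field K] [NeZero (2 : K)] [NeZero (3 : K)]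
    (a b c : K) (h : a + b + c = 0) :
    (X - C a) * (X - C b) * (X - C c) =
      X ^ 3 - C ((a ^ 2 + b ^ 2 + c ^ 2) / 2) * X - C ((a ^ 3 + b ^ 3 + c ^ 3) / 3) := by
  obtain rfl : c = -a - b := by linear_combination h
  have h2 : (a ^ 2 + b ^ 2 + (-a - b) ^ 2) / 2 = a ^ 2 + a * b + b ^ 2 := by
    field_simp
    ring
  have h3 : (a ^ 3 + b ^ 3 + (-a - b) ^ 3) / 3 = -(a * b * (a + b)) := by
    field_simp
    ring
  rw [h2, h3]
  simp only [map_add, map_mul, map_neg, map_sub, map_pow]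
  ring

theorem cube_sum_sq_sub_six_mul_sq_sum_cube_of_add_add_eq_zero {R : Type*} [CommRing R]
    (a b c : R) (h : a + b + c = 0) :
    (a ^ 2 + b ^ 2 + c ^ 2) ^ 3 - 6 * (a ^ 3 + b ^ 3 + c ^ 3) ^ 2 =
      2 * ((a - b) * (b - c) * (c - a)) ^ 2 := by
  obtain rfl : c = -a - b := by linear_combination h
  ring

theorem six_mul_sq_sum_cube_le_cube_sum_sq {R : Type*} [CommRing R] [LinearOrder R]
    [IsStrictOrderedRing R] (a b c : R) (h : a + b + c = 0) :
    6 * (a ^ 3 + b ^ 3 + c ^ 3) ^ 2 ≤ (a ^ 2 + b ^ 2 + c ^ 2) ^ 3 := by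
  linarith [cube_sum_sq_sub_six_mul_sq_sum_cube_of_add_add_eq_zero a b c h,
    sq_nonneg ((a - b) * (b - c) * (c - a))]

/-- For a traceless symmetric real 3×3 matrix `M`, with `y = tr (M²)` and
`z = tr (M³)`, the characteristic polynomial of `M` is `x³ − (y/2)·x − (z/3)`; moreover if
`y > 0` then `ζ = z²/y³` satisfies `0 ≤ ζ ≤ 1/6`. -/
theorem traceless_symm_charpoly_and_zeta_bound
    (M : Matrix (Fin 3) (Fin 3) ℝ) (hM : M.IsSymm) (htr : M.trace = 0)
    (y z : ℝ) (hy : y = (M ^ 2).trace) (hz : z = (M ^ 3).trace) :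
    M.charpoly = X ^ 3 - C (y / 2) * X - C (z / 3) ∧
    (0 < y → 0 ≤ z ^ 2 / y ^ 3 ∧ z ^ 2 / y ^ 3 ≤ 1 / 6) := by
  have hA : M.IsHermitian := isHermitian_iff_isSymm.mpr hM
  set e := hA.eigenvalues
  have hpow (k : ℕ) : (M ^ k).trace = e 0 ^ k + e 1 ^ k + e 2 ^ k := by
    simpa [Fin.sum_univ_three] using hA.trace_pow_eq_sum_eigenvalues_pow k
  have hsum : e 0 + e 1 + e 2 = 0 := by simpa [htr] using (hpow 1).symm
  rw [hpow] at hy hz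
  refine ⟨?_, fun hy0 => ⟨by positivity, ?_⟩⟩
  · simpa [hA.charpoly_eq, Fin.prod_univ_three, hy, hz] using
      prod_X_sub_C_of_add_add_eq_zero _ _ _ hsum
  · rw [div_le_div_iff₀ (by positivity) (by norm_num), hy, hz]
    linarith [six_mul_sq_sum_cube_le_cube_sum_sq _ _ _ hsum]
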